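/- arXiv:1608.00302 — 8 statements merged into one kernel-verified Lean document; each statement's English description precedes it below -/
import Mathlib

section
/- Let G = (A, R) be a finite argument graph and let E ⊆ A be conflict-free. Let E⁺ = {β ∈ A | ∃α ∈ E, (α, β) ∈ R} and E⁻ = {β ∈ A | ∃α ∈ E, (β, α) ∈ R}. Then for every A' ⊆ A, E is an admissible set of the induced subgraph G↾A' if and only if E ⊆ A' and A' ∩ (E⁻ \ E⁺) = ∅. -/
open scoped Classical

variable {α : Type*} [DecidableEq α]

/-- `E` is conflict-free w.r.t. attack relation `R`. -/
def ConflictFree (R : α → α → Prop) (E : Finset α) : Prop :=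
  ∀ a ∈ E, ∀ b ∈ E, ¬ R a b

/-- `a` is acceptable with respect to `E` under attack relation `R`. -/
def Acceptable (R : α → α → Prop) (E : Finset α) (a : α) : Prop :=
  ∀ b, R b a → ∃ c ∈ E, R c b

/-- The attack relation of the induced subgraph on `A'`: `R ∩ (A' × A')`. -/
def Restrict (A' : Finset α) (R : α → α → Prop) : α → α → Prop :=
  fun a b => a ∈ A' ∧ b ∈ A' ∧ R a b

/-- `E` is an admissible set of the induced subgraph on `A'`. -/
def AdmissibleIn (A' : Finset α) (R : α → α → Prop) (E : Finset α) : Prop :=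
  E ⊆ A' ∧ ConflictFree (Restrict A' R) E ∧
    ∀ a ∈ E, Acceptable (Restrict A' R) E a

/-- `E` is a complete extension of the induced subgraph on `A'`. -/
def CompleteIn (A' : Finset α) (R : α → α → Prop) (E : Finset α) : Prop :=
  AdmissibleIn A' R E ∧ ∀ a ∈ A', Acceptable (Restrict A' R) E a → a ∈ E

/-- `E` is a stable extension of the induced subgraph on `A'`. -/
def StableIn (A' : Finset α) (R : α → α → Prop) (E : Finset α) : Prop :=
  E ⊆ A' ∧ ConflictFree (Restrict A' R) E ∧
    ∀ a ∈ A', a ∉ E → ∃ c ∈ E, Restrict A' R c a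

/-- `E` is a preferred extension (⊆-maximal admissible set) of the induced subgraph on `A'`. -/
def PreferredIn (A' : Finset α) (R : α → α → Prop) (E : Finset α) : Prop :=
  AdmissibleIn A' R E ∧ ∀ F : Finset α, AdmissibleIn A' R F → E ⊆ F → F = E

/-- `E` is the grounded extension (⊆-least complete extension) of the induced subgraph on `A'`. -/
def GroundedIn (A' : Finset α) (R : α → α → Prop) (E : Finset α) : Prop :=
  CompleteIn A' R E ∧ ∀ F : Finset α, CompleteIn A' R F → E ⊆ F

section Admissibility

variable {β : Type*} {R : β → β → Prop} {A' E : Finset β}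

theorem ConflictFree.restrict (hcf : ConflictFree R E) : ConflictFree (Restrict A' R) E :=
  fun a ha b hb hab => hcf a ha b hb hab.2.2

/-- Only attackers inside `A'` count, while a counter-attack from `E ⊆ A'` is automatically
an attack of the induced subgraph. -/
theorem forall_acceptable_restrict_iff (hEA' : E ⊆ A') :
    (∀ a ∈ E, Acceptable (Restrict A' R) E a) ↔
      ∀ b ∈ A', (∃ a ∈ E, R b a) → ∃ c ∈ E, R c b := by
  constructor
  · rintro hacc b hbA' ⟨a, haE, hba⟩
    obtain ⟨c, hcE, -, -, hcb⟩ := hacc a haE b ⟨hbA', hEA' haE, hba⟩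
    exact ⟨c, hcE, hcb⟩
  · rintro hdef a haE b ⟨hbA', -, hba⟩
    obtain ⟨c, hcE, hcb⟩ := hdef b hbA' ⟨a, haE, hba⟩
    exact ⟨c, hcE, hEA' hcE, hbA', hcb⟩

theorem ConflictFree.admissibleIn_iff (hcf : ConflictFree R E) :
    AdmissibleIn A' R E ↔ E ⊆ A' ∧ ∀ b ∈ A', (∃ a ∈ E, R b a) → ∃ c ∈ E, R c b := by
  refine ⟨fun ⟨hEA', _, hacc⟩ => ⟨hEA', (forall_acceptable_restrict_iff hEA').1 hacc⟩,
    fun ⟨hEA', hdef⟩ => ⟨hEA', hcf.restrict, (forall_acceptable_restrict_iff hEA').2 hdef⟩⟩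

end Admissibility

theorem inter_sdiff_filter_eq_empty_iff {A A' : Finset α} (hA' : A' ⊆ A) {p q : α → Prop}
    [DecidablePred p] [DecidablePred q] :
    A' ∩ (A.filter p \ A.filter q) = ∅ ↔ ∀ b ∈ A', p b → q b := by
  simp only [Finset.eq_empty_iff_forall_notMem, Finset.mem_inter, Finset.mem_sdiff,
    Finset.mem_filter]
  exact forall_congr' fun b =>
    ⟨fun h hb hp => by_contra fun hq => h ⟨hb, ⟨hA' hb, hp⟩, fun h' => hq h'.2⟩,
      fun h ⟨hb, ⟨_, hp⟩, hnq⟩ => hnq ⟨hA' hb, h hb hp⟩⟩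

theorem stmt1_general (A : Finset α) (R : Finset (α × α))
    (E : Finset α)
    (hcf : ConflictFree (fun a b => (a, b) ∈ R) E)
    (Eplus Eminus : Finset α)
    (hEp : Eplus = A.filter (fun b => ∃ a ∈ E, (a, b) ∈ R))
    (hEm : Eminus = A.filter (fun b => ∃ a ∈ E, (b, a) ∈ R))
    (A' : Finset α) (hA' : A' ⊆ A) :
    AdmissibleIn A' (fun a b => (a, b) ∈ R) E ↔
      E ⊆ A' ∧ A' ∩ (Eminus \ Eplus) = ∅ := by
  rw [hcf.admissibleIn_iff, hEp, hEm, inter_sdiff_filter_eq_empty_iff hA']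

theorem stmt1 (A : Finset α) (R : Finset (α × α)) (hRA : R ⊆ A ×ˢ A)
    (E : Finset α) (hEA : E ⊆ A)
    (hcf : ConflictFree (fun a b => (a, b) ∈ R) E)
    (Eplus Eminus : Finset α)
    (hEp : Eplus = A.filter (fun b => ∃ a ∈ E, (a, b) ∈ R))
    (hEm : Eminus = A.filter (fun b => ∃ a ∈ E, (b, a) ∈ R))
    (A' : Finset α) (hA' : A' ⊆ A) :
    AdmissibleIn A' (fun a b => (a, b) ∈ R) E ↔
      E ⊆ A' ∧ A' ∩ (Eminus \ Eplus) = ∅ :=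
  stmt1_general A R E hcf Eplus Eminus hEp hEm A' hA'
end

section
/- Let G = (A, R) be a finite argument graph and let E ⊆ A be conflict-free. Let E⁺ = {β ∈ A | ∃α ∈ E, (α, β) ∈ R}, E⁻ = {β ∈ A | ∃α ∈ E, (β, α) ∈ R}, and I = A \ (E ∪ E⁺ ∪ E⁻). Let B ⊆ I ∪ E⁺ and B' = B ∩ I. Then E is a complete extension of the induced subgraph G↾(E ∪ B) if and only if for every α ∈ B', the set {β ∈ A | (β, α) ∈ R} ∩ B' is nonempty. -/
open scoped Classical

variable {α : Type*} [DecidableEq α]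

/-!
Every attacker of `E` inside `B ⊆ I ∪ E⁺` lies in `E⁺`, so it is counter-attacked by `E`, and
`E` is always admissible in `G↾(E ∪ B)`. An argument of `B` attacked by `E` cannot be defended by
the conflict-free set `E`. An argument `a ∈ B'` is not attacked by `E`, and among its attackers in
`E ∪ B` exactly those in `B'` escape a counter-attack from `E`; so `a` is acceptable precisely
when it has no attacker in `B'`. Since `B` is disjoint from `E`, completeness
says that no argument of `B` is acceptable.
-/

open Finset

/- `attackedBy A R E`, `attackersOf A R E` and `unrelatedTo A R E` are the paper's `E⁺`, `E⁻`
and `I`. -/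
noncomputable def attackedBy (A : Finset α) (R : α → α → Prop) (E : Finset α) : Finset α :=
  A.filter fun b => ∃ a ∈ E, R a b

noncomputable def attackersOf (A : Finset α) (R : α → α → Prop) (E : Finset α) : Finset α :=
  A.filter fun b => ∃ a ∈ E, R b a

noncomputable def unrelatedTo (A : Finset α) (R : α → α → Prop) (E : Finset α) : Finset α :=
  A \ (E ∪ attackedBy A R E ∪ attackersOf A R E)

theorem acceptable_restrict_iff {β : Type*} {R : β → β → Prop} {A' E : Finset β} {a : β}
    (hE : E ⊆ A') (ha : a ∈ A') :
    Acceptable (Restrict A' R) E a ↔ ∀ b ∈ A', R b a → ∃ c ∈ E, R c b := by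
  constructor
  · intro h b hb hba
    obtain ⟨c, hc, -, -, hcb⟩ := h b ⟨hb, ha, hba⟩
    exact ⟨c, hc, hcb⟩
  · rintro h b ⟨hb, -, hba⟩
    obtain ⟨c, hc, hcb⟩ := h b hb hba
    exact ⟨c, hc, hE hc, hb, hcb⟩

section

variable {R : α → α → Prop} {A E B : Finset α} {a : α}

theorem mem_unrelatedTo :
    a ∈ unrelatedTo A R E ↔
      a ∈ A ∧ a ∉ E ∧ (∀ c ∈ E, ¬ R c a) ∧ ∀ c ∈ E, ¬ R a c := by
  simp only [unrelatedTo, attackedBy, attackersOf, mem_sdiff, mem_union, mem_filter]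
  grind

theorem exists_attacker_of_notMem_unrelatedTo (ha : a ∈ unrelatedTo A R E ∪ attackedBy A R E)
    (haI : a ∉ unrelatedTo A R E) : ∃ c ∈ E, R c a := by
  rcases mem_union.1 ha with haI' | haP
  · exact absurd haI' haI
  · exact (mem_filter.1 haP).2

theorem notMem_of_mem_unrelatedTo_union_attackedBy (hcf : ConflictFree R E)
    (ha : a ∈ unrelatedTo A R E ∪ attackedBy A R E) : a ∉ E := by
  by_cases haI : a ∈ unrelatedTo A R E
  · exact (mem_unrelatedTo.1 haI).2.1
  · obtain ⟨c, hc, hca⟩ := exists_attacker_of_notMem_unrelatedTo ha haI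
    exact fun haE => hcf c hc a haE hca

theorem admissibleIn_union (hcf : ConflictFree R E)
    (hdef : ∀ b ∈ B, ∀ a ∈ E, R b a → ∃ c ∈ E, R c b) : AdmissibleIn (E ∪ B) R E := by
  refine ⟨subset_union_left, fun a ha b hb hab => hcf a ha b hb hab.2.2, fun a ha => ?_⟩
  rw [acceptable_restrict_iff subset_union_left (mem_union_left _ ha)]
  intro b hb hba
  rcases mem_union.1 hb with hbE | hbB
  · exact absurd hba (hcf b hbE a ha)
  · exact hdef b hbB a ha hba

theorem acceptable_union_iff (hcf : ConflictFree R E)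
    (hB : B ⊆ unrelatedTo A R E ∪ attackedBy A R E) (ha : a ∈ B) :
    Acceptable (Restrict (E ∪ B) R) E a ↔
      a ∈ unrelatedTo A R E ∧ ∀ b ∈ B ∩ unrelatedTo A R E, ¬ R b a := by
  rw [acceptable_restrict_iff subset_union_left (mem_union_right _ ha)]
  constructor
  · intro h
    refine ⟨?_, fun b hb hba => ?_⟩
    · by_contra haI
      obtain ⟨c, hc, hca⟩ := exists_attacker_of_notMem_unrelatedTo (hB ha) haI
      obtain ⟨d, hd, hdc⟩ := h c (mem_union_left _ hc) hca
      exact hcf d hd c hc hdc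
    · obtain ⟨hbB, hbI⟩ := mem_inter.1 hb
      obtain ⟨c, hc, hcb⟩ := h b (mem_union_right _ hbB) hba
      exact (mem_unrelatedTo.1 hbI).2.2.1 c hc hcb
  · rintro ⟨haI, hno⟩ b hb hba
    rcases mem_union.1 hb with hbE | hbB
    · exact absurd hba ((mem_unrelatedTo.1 haI).2.2.1 b hbE)
    · by_cases hbI : b ∈ unrelatedTo A R E
      · exact absurd hba (hno b (mem_inter.2 ⟨hbB, hbI⟩))
      · exact exists_attacker_of_notMem_unrelatedTo (hB hbB) hbI

theorem completeIn_union_iff (hcf : ConflictFree R E)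
    (hB : B ⊆ unrelatedTo A R E ∪ attackedBy A R E) :
    CompleteIn (E ∪ B) R E ↔
      ∀ a ∈ B ∩ unrelatedTo A R E, ∃ b ∈ B ∩ unrelatedTo A R E, R b a := by
  have hadm : AdmissibleIn (E ∪ B) R E :=
    admissibleIn_union hcf fun b hb a ha hba =>
      exists_attacker_of_notMem_unrelatedTo (hB hb) fun hbI =>
        (mem_unrelatedTo.1 hbI).2.2.2 a ha hba
  simp only [CompleteIn, hadm, true_and]
  constructor
  · intro h a ha
    obtain ⟨haB, haI⟩ := mem_inter.1 ha
    by_contra! hno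
    have haE := h a (mem_union_right _ haB) ((acceptable_union_iff hcf hB haB).2 ⟨haI, hno⟩)
    exact notMem_of_mem_unrelatedTo_union_attackedBy hcf (hB haB) haE
  · intro h a ha hacc
    rcases mem_union.1 ha with haE | haB
    · exact haE
    · obtain ⟨haI, hno⟩ := (acceptable_union_iff hcf hB haB).1 hacc
      obtain ⟨b, hb, hba⟩ := h a (mem_inter.2 ⟨haB, haI⟩)
      exact absurd hba (hno b hb)

end

theorem stmt4_general (A : Finset α) (R : Finset (α × α))
    (E : Finset α)
    (hcf : ConflictFree (fun a b => (a, b) ∈ R) E)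
    (Eplus Eminus I : Finset α)
    (hEp : Eplus = A.filter (fun b => ∃ a ∈ E, (a, b) ∈ R))
    (hEm : Eminus = A.filter (fun b => ∃ a ∈ E, (b, a) ∈ R))
    (hI : I = A \ (E ∪ Eplus ∪ Eminus))
    (B B' : Finset α) (hB : B ⊆ I ∪ Eplus) (hB' : B' = B ∩ I) :
    CompleteIn (E ∪ B) (fun a b => (a, b) ∈ R) E ↔
      ∀ a ∈ B', ((A.filter (fun b => (b, a) ∈ R)) ∩ B').Nonempty := by
  have hEp' : Eplus = attackedBy A (fun a b => (a, b) ∈ R) E := by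
    rw [hEp, attackedBy]
    congr -- the two filters differ only in their decidability instances
  have hEm' : Eminus = attackersOf A (fun a b => (a, b) ∈ R) E := by
    rw [hEm, attackersOf]
    congr
  have hI' : I = unrelatedTo A (fun a b => (a, b) ∈ R) E := by
    rw [hI, hEp', hEm', unrelatedTo]
  rw [hI', hEp'] at hB
  have hB'A : B' ⊆ A := hB' ▸ hI ▸ inter_subset_right.trans sdiff_subset
  rw [completeIn_union_iff hcf hB, ← hI', ← hB']
  refine forall₂_congr fun a _ => ?_
  rw [filter_inter, inter_eq_right.2 hB'A, filter_nonempty_iff]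

theorem stmt4 (A : Finset α) (R : Finset (α × α)) (hRA : R ⊆ A ×ˢ A)
    (E : Finset α) (hEA : E ⊆ A)
    (hcf : ConflictFree (fun a b => (a, b) ∈ R) E)
    (Eplus Eminus I : Finset α)
    (hEp : Eplus = A.filter (fun b => ∃ a ∈ E, (a, b) ∈ R))
    (hEm : Eminus = A.filter (fun b => ∃ a ∈ E, (b, a) ∈ R))
    (hI : I = A \ (E ∪ Eplus ∪ Eminus))
    (B B' : Finset α) (hB : B ⊆ I ∪ Eplus) (hB' : B' = B ∩ I) :
    CompleteIn (E ∪ B) (fun a b => (a, b) ∈ R) E ↔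
      ∀ a ∈ B', ((A.filter (fun b => (b, a) ∈ R)) ∩ B').Nonempty :=
  stmt4_general A R E hcf Eplus Eminus I hEp hEm hI B B' hB hB'
end

section
/- Let G = (A, R) be a finite argument graph and let E ⊆ A be conflict-free. Let E⁺ = {β ∈ A | ∃α ∈ E, (α, β) ∈ R}, E⁻ = {β ∈ A | ∃α ∈ E, (β, α) ∈ R}, and I = A \ (E ∪ E⁺ ∪ E⁻). Let B ⊆ I ∪ E⁺ and B' = B ∩ I. Then E is a preferred extension of the induced subgraph G↾(E ∪ B) if and only if E is a complete extension of G↾(E ∪ B) and the empty set is the only admissible set of the induced subgraph G↾B'. -/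
open scoped Classical

variable {α : Type*} [DecidableEq α]

/-!
Inside `G↾(E ∪ B)`, the part `B'` of `B` neither attacks nor is attacked by `E`, and the rest of
`B` is attacked by `E`. Hence `E ∪ S` is admissible in `G↾(E ∪ B)` for every admissible `S` of
`G↾B'`; conversely, if `F ⊇ E` is admissible in `G↾(E ∪ B)` then `F \ E` lies in `B'` and is
admissible there, since its defenders against attackers from `B'` cannot lie in `E`. So `E` is
⊆-maximal admissible exactly when `G↾B'` has no nonempty admissible set, and a maximal admissible
set is complete by Dung's fundamental lemma (`AdmissibleIn.insert`).
-/

open Finset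

theorem admissibleIn_empty {β : Type*} {A' : Finset β} {R : β → β → Prop} :
    AdmissibleIn A' R ∅ :=
  ⟨empty_subset _, by simp [ConflictFree], by simp⟩

theorem Acceptable.mono {β : Type*} {R : β → β → Prop} {E F : Finset β} {a : β}
    (h : Acceptable R E a) (hEF : E ⊆ F) : Acceptable R F a := fun b hba =>
  let ⟨c, hc, hcb⟩ := h b hba
  ⟨c, hEF hc, hcb⟩

section Admissibility

variable {A' : Finset α} {R : α → α → Prop} {E : Finset α}

theorem AdmissibleIn.insert (hE : AdmissibleIn A' R E) {a : α} (ha : a ∈ A')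
    (hacc : Acceptable (Restrict A' R) E a) : AdmissibleIn A' R (insert a E) := by
  obtain ⟨hsub, hcf, hdef⟩ := hE
  have hE_a : ∀ x ∈ E, ¬ Restrict A' R x a := fun x hx hxa => by
    obtain ⟨c, hc, hcx⟩ := hacc x hxa
    exact hcf c hc x hx hcx
  have ha_E : ∀ y ∈ E, ¬ Restrict A' R a y := fun y hy hay => by
    obtain ⟨c, hc, hca⟩ := hdef y hy a hay
    exact hE_a c hc hca
  have ha_a : ¬ Restrict A' R a a := fun haa => by
    obtain ⟨c, hc, hca⟩ := hacc a haa
    exact hE_a c hc hca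
  refine ⟨insert_subset ha hsub, ?_, ?_⟩
  · intro x hx y hy
    obtain rfl | hxE := mem_insert.1 hx <;> obtain rfl | hyE := mem_insert.1 hy
    exacts [ha_a, ha_E y hyE, hE_a x hxE, hcf x hxE y hyE]
  · intro x hx
    obtain rfl | hx := mem_insert.1 hx
    exacts [hacc.mono (subset_insert _ _), (hdef x hx).mono (subset_insert _ _)]

theorem PreferredIn.completeIn (h : PreferredIn A' R E) : CompleteIn A' R E :=
  ⟨h.1, fun a ha hacc => h.2 _ (h.1.insert ha hacc) (subset_insert a E) ▸ mem_insert_self a E⟩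

end Admissibility

/-- In the application `B'` is `B ∩ I` and `B \ B' ⊆ E⁺`. -/
structure Splitting (R : α → α → Prop) (E B B' : Finset α) : Prop where
  conflictFree : ConflictFree R E
  subset : B' ⊆ B
  disjoint : Disjoint E B'
  attacked_of_notMem : ∀ b ∈ B, b ∉ B' → ∃ e ∈ E, R e b
  not_attacked : ∀ x ∈ B', ∀ e ∈ E, ¬ R e x
  not_attacks : ∀ x ∈ B', ∀ e ∈ E, ¬ R x e

namespace Splitting

variable {R : α → α → Prop} {E B B' : Finset α}

theorem admissibleIn_self (h : Splitting R E B B') : AdmissibleIn (E ∪ B) R E := by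
  refine ⟨subset_union_left, fun a ha b hb hab => h.conflictFree a ha b hb hab.2.2, ?_⟩
  rintro a ha b ⟨hb, -, hba⟩
  rcases mem_union.1 hb with hbE | hbB
  · exact absurd hba (h.conflictFree b hbE a ha)
  by_cases hbB' : b ∈ B'
  · exact absurd hba (h.not_attacks b hbB' a ha)
  obtain ⟨e, he, heb⟩ := h.attacked_of_notMem b hbB hbB'
  exact ⟨e, he, mem_union_left _ he, hb, heb⟩

theorem admissibleIn_union (h : Splitting R E B B') {S : Finset α}
    (hS : AdmissibleIn B' R S) : AdmissibleIn (E ∪ B) R (E ∪ S) := by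
  obtain ⟨hSB', hScf, hSdef⟩ := hS
  have hSB : S ⊆ B := hSB'.trans h.subset
  refine ⟨union_subset_union subset_rfl hSB, ?_, ?_⟩
  · intro x hx y hy hxy
    rcases mem_union.1 hx with hx | hx <;> rcases mem_union.1 hy with hy | hy
    · exact h.conflictFree x hx y hy hxy.2.2
    · exact h.not_attacked y (hSB' hy) x hx hxy.2.2
    · exact h.not_attacks x (hSB' hx) y hy hxy.2.2
    · exact hScf x hx y hy ⟨hSB' hx, hSB' hy, hxy.2.2⟩
  intro x hx
  rcases mem_union.1 hx with hx | hx
  · exact (h.admissibleIn_self.2.2 x hx).mono subset_union_left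
  rintro b ⟨hb, -, hbx⟩
  rcases mem_union.1 hb with hbE | hbB
  · exact absurd hbx (h.not_attacked x (hSB' hx) b hbE)
  by_cases hbB' : b ∈ B'
  · obtain ⟨c, hc, hcb⟩ := hSdef x hx b ⟨hbB', hSB' hx, hbx⟩
    exact ⟨c, mem_union_right _ hc, mem_union_right _ (hSB hc), hb, hcb.2.2⟩
  · obtain ⟨e, he, heb⟩ := h.attacked_of_notMem b hbB hbB'
    exact ⟨e, mem_union_left _ he, mem_union_left _ he, hb, heb⟩

theorem admissibleIn_sdiff (h : Splitting R E B B') {F : Finset α}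
    (hF : AdmissibleIn (E ∪ B) R F) (hEF : E ⊆ F) : AdmissibleIn B' R (F \ E) := by
  obtain ⟨hFsub, hFcf, hFdef⟩ := hF
  have hsub : F \ E ⊆ B' := by
    intro s hs
    obtain ⟨hsF, hsE⟩ := mem_sdiff.1 hs
    have hsB : s ∈ B := (mem_union.1 (hFsub hsF)).resolve_left hsE
    by_contra hsB'
    obtain ⟨e, he, hes⟩ := h.attacked_of_notMem s hsB hsB'
    exact hFcf e (hEF he) s hsF ⟨hFsub (hEF he), hFsub hsF, hes⟩
  refine ⟨hsub, ?_, ?_⟩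
  · intro x hx y hy hxy
    have hxF := (mem_sdiff.1 hx).1
    have hyF := (mem_sdiff.1 hy).1
    exact hFcf x hxF y hyF ⟨hFsub hxF, hFsub hyF, hxy.2.2⟩
  rintro x hx b ⟨hb, -, hbx⟩
  have hxF := (mem_sdiff.1 hx).1
  obtain ⟨c, hcF, hcb⟩ := hFdef x hxF b ⟨mem_union_right _ (h.subset hb), hFsub hxF, hbx⟩
  have hc : c ∈ F \ E := mem_sdiff.2 ⟨hcF, fun hcE => h.not_attacked b hb c hcE hcb.2.2⟩
  exact ⟨c, hc, hsub hc, hb, hcb.2.2⟩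

theorem preferredIn_iff (h : Splitting R E B B') :
    PreferredIn (E ∪ B) R E ↔
      CompleteIn (E ∪ B) R E ∧ ∀ S : Finset α, AdmissibleIn B' R S ↔ S = ∅ := by
  constructor
  · intro hpref
    refine ⟨hpref.completeIn, fun S => ⟨fun hS => ?_, fun hS => hS ▸ admissibleIn_empty⟩⟩
    have hSE : S ⊆ E := union_eq_left.1 (hpref.2 _ (h.admissibleIn_union hS) subset_union_left)
    exact eq_empty_of_forall_notMem fun s hs => disjoint_left.1 h.disjoint (hSE hs) (hS.1 hs)
  · rintro ⟨hcomp, hB'⟩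
    refine ⟨hcomp.1, fun F hF hEF => subset_antisymm ?_ hEF⟩
    exact sdiff_eq_empty_iff_subset.1 ((hB' _).1 (h.admissibleIn_sdiff hF hEF))

end Splitting

theorem splitting_inter_of_subset_union {A : Finset α} {R : Finset (α × α)}
    {E Eplus Eminus I B : Finset α} (hcf : ConflictFree (fun a b => (a, b) ∈ R) E)
    (hEp : Eplus = A.filter (fun b => ∃ a ∈ E, (a, b) ∈ R))
    (hEm : Eminus = A.filter (fun b => ∃ a ∈ E, (b, a) ∈ R))
    (hI : I = A \ (E ∪ Eplus ∪ Eminus)) (hB : B ⊆ I ∪ Eplus) :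
    Splitting (fun a b => (a, b) ∈ R) E B (B ∩ I) := by
  subst hEp hEm hI
  refine ⟨hcf, inter_subset_left, ?_, ?_, ?_, ?_⟩
  · exact disjoint_left.2 fun x hxE hx => (mem_sdiff.1 (mem_inter.1 hx).2).2
      (mem_union_left _ (mem_union_left _ hxE))
  · intro b hb hbI
    have hbEp := (mem_union.1 (hB hb)).resolve_left fun h => hbI (mem_inter.2 ⟨hb, h⟩)
    exact (mem_filter.1 hbEp).2
  · intro x hx e he hex
    obtain ⟨hxA, hxI⟩ := mem_sdiff.1 (mem_inter.1 hx).2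
    exact hxI (mem_union_left _ (mem_union_right _ (mem_filter.2 ⟨hxA, e, he, hex⟩)))
  · intro x hx e he hxe
    obtain ⟨hxA, hxI⟩ := mem_sdiff.1 (mem_inter.1 hx).2
    exact hxI (mem_union_right _ (mem_filter.2 ⟨hxA, e, he, hxe⟩))

theorem stmt5_general (A : Finset α) (R : Finset (α × α))
    (E : Finset α)
    (hcf : ConflictFree (fun a b => (a, b) ∈ R) E)
    (Eplus Eminus I : Finset α)
    (hEp : Eplus = A.filter (fun b => ∃ a ∈ E, (a, b) ∈ R))
    (hEm : Eminus = A.filter (fun b => ∃ a ∈ E, (b, a) ∈ R))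
    (hI : I = A \ (E ∪ Eplus ∪ Eminus))
    (B B' : Finset α) (hB : B ⊆ I ∪ Eplus) (hB' : B' = B ∩ I) :
    PreferredIn (E ∪ B) (fun a b => (a, b) ∈ R) E ↔
      (CompleteIn (E ∪ B) (fun a b => (a, b) ∈ R) E ∧
        ∀ S : Finset α, AdmissibleIn B' (fun a b => (a, b) ∈ R) S ↔ S = ∅) :=
  hB' ▸ (splitting_inter_of_subset_union hcf hEp hEm hI hB).preferredIn_iff

theorem stmt5 (A : Finset α) (R : Finset (α × α)) (hRA : R ⊆ A ×ˢ A)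
    (E : Finset α) (hEA : E ⊆ A)
    (hcf : ConflictFree (fun a b => (a, b) ∈ R) E)
    (Eplus Eminus I : Finset α)
    (hEp : Eplus = A.filter (fun b => ∃ a ∈ E, (a, b) ∈ R))
    (hEm : Eminus = A.filter (fun b => ∃ a ∈ E, (b, a) ∈ R))
    (hI : I = A \ (E ∪ Eplus ∪ Eminus))
    (B B' : Finset α) (hB : B ⊆ I ∪ Eplus) (hB' : B' = B ∩ I) :
    PreferredIn (E ∪ B) (fun a b => (a, b) ∈ R) E ↔
      (CompleteIn (E ∪ B) (fun a b => (a, b) ∈ R) E ∧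
        ∀ S : Finset α, AdmissibleIn B' (fun a b => (a, b) ∈ R) S ↔ S = ∅) :=
  stmt5_general A R E hcf Eplus Eminus I hEp hEm hI B B' hB hB'
end

section
/- Let G = (A, R) be a finite argument graph and let E ⊆ A be conflict-free. Let E⁺ = {β ∈ A | ∃α ∈ E, (α, β) ∈ R}, E⁻ = {β ∈ A | ∃α ∈ E, (β, α) ∈ R}, and I = A \ (E ∪ E⁺ ∪ E⁻). Let B ⊆ I ∪ E⁺ and B' = B ∩ I. If E is an admissible set of the induced subgraph G↾(E ∪ B) and E' ⊆ B' is an admissible set of the induced subgraph G↾B', then E ∪ E' is an admissible set of G↾(E ∪ B). -/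
/-! `E'` lies in `I`, so no attack runs between `E` and `E'`. An attacker of `E'` inside `E ∪ B`
lies either in `I`, hence in `B'`, where `E'` defends itself, or in `E⁺`, where `E` defends
`E'` against it. -/

open scoped Classical

variable {α : Type*} [DecidableEq α]

open Finset

section Admissible

variable {R : α → α → Prop} {S T E E' : Finset α}

lemma AdmissibleIn.union (hE : AdmissibleIn S R E) (hE' : AdmissibleIn T R E') (hTS : T ⊆ S)
    (hsep : ∀ a ∈ E, ∀ b ∈ E', ¬ R a b ∧ ¬ R b a)
    (hdef : ∀ b ∈ S, ∀ a ∈ E', R b a → b ∈ T ∨ ∃ c ∈ E, R c b) :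
    AdmissibleIn S R (E ∪ E') := by
  obtain ⟨hES, hEcf, hEacc⟩ := hE
  obtain ⟨hE'T, hE'cf, hE'acc⟩ := hE'
  refine ⟨union_subset hES (hE'T.trans hTS), ?_, ?_⟩
  · rintro a ha b hb ⟨haS, hbS, hab⟩
    rcases mem_union.1 ha with haE | haE' <;> rcases mem_union.1 hb with hbE | hbE'
    · exact hEcf a haE b hbE ⟨haS, hbS, hab⟩
    · exact (hsep a haE b hbE').1 hab
    · exact (hsep b hbE a haE').2 hab
    · exact hE'cf a haE' b hbE' ⟨hE'T haE', hE'T hbE', hab⟩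
  · rintro a ha b ⟨hbS, haS, hba⟩
    rcases mem_union.1 ha with haE | haE'
    · obtain ⟨c, hcE, hcb⟩ := hEacc a haE b ⟨hbS, haS, hba⟩
      exact ⟨c, mem_union_left _ hcE, hcb⟩
    · rcases hdef b hbS a haE' hba with hbT | ⟨c, hcE, hcb⟩
      · obtain ⟨c, hcE', hcb⟩ := hE'acc a haE' b ⟨hbT, hE'T haE', hba⟩
        exact ⟨c, mem_union_right _ hcE', hTS (hE'T hcE'), hbS, hcb.2.2⟩
      · exact ⟨c, mem_union_left _ hcE, hES hcE, hbS, hcb⟩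

end Admissible

lemma not_attack_of_mem_sdiff {A E : Finset α} {R : Finset (α × α)} {x a : α}
    (hx : x ∈ A \ (E ∪ A.filter (fun b => ∃ a ∈ E, (a, b) ∈ R) ∪
      A.filter (fun b => ∃ a ∈ E, (b, a) ∈ R)))
    (ha : a ∈ E) : (a, x) ∉ R ∧ (x, a) ∉ R := by
  simp only [mem_sdiff, mem_union, mem_filter, not_or, not_and, not_exists] at hx
  exact ⟨hx.2.1.2 hx.1 a ha, hx.2.2 hx.1 a ha⟩

theorem stmt6_general (A : Finset α) (R : Finset (α × α))
    (E : Finset α)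
    (Eplus Eminus I : Finset α)
    (hEp : Eplus = A.filter (fun b => ∃ a ∈ E, (a, b) ∈ R))
    (hEm : Eminus = A.filter (fun b => ∃ a ∈ E, (b, a) ∈ R))
    (hI : I = A \ (E ∪ Eplus ∪ Eminus))
    (B B' : Finset α) (hB : B ⊆ I ∪ Eplus) (hB' : B' = B ∩ I)
    (hadm : AdmissibleIn (E ∪ B) (fun a b => (a, b) ∈ R) E)
    (E' : Finset α)
    (hadm' : AdmissibleIn B' (fun a b => (a, b) ∈ R) E') :
    AdmissibleIn (E ∪ B) (fun a b => (a, b) ∈ R) (E ∪ E') := by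
  subst hEp hEm hI hB'
  have hE'I : ∀ x ∈ E', x ∈ A \ _ := fun x hx => (mem_inter.1 (hadm'.1 hx)).2
  refine hadm.union hadm' (inter_subset_left.trans subset_union_right)
    (fun a ha b hb => not_attack_of_mem_sdiff (hE'I b hb) ha) ?_
  intro b hb a ha hba
  rcases mem_union.1 hb with hbE | hbB
  · exact absurd hba (not_attack_of_mem_sdiff (hE'I a ha) hbE).1
  rcases mem_union.1 (hB hbB) with hbI | hbEp
  · exact .inl (mem_inter.2 ⟨hbB, hbI⟩)
  · exact .inr (mem_filter.1 hbEp).2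

theorem stmt6 (A : Finset α) (R : Finset (α × α)) (hRA : R ⊆ A ×ˢ A)
    (E : Finset α) (hEA : E ⊆ A)
    (hcf : ConflictFree (fun a b => (a, b) ∈ R) E)
    (Eplus Eminus I : Finset α)
    (hEp : Eplus = A.filter (fun b => ∃ a ∈ E, (a, b) ∈ R))
    (hEm : Eminus = A.filter (fun b => ∃ a ∈ E, (b, a) ∈ R))
    (hI : I = A \ (E ∪ Eplus ∪ Eminus))
    (B B' : Finset α) (hB : B ⊆ I ∪ Eplus) (hB' : B' = B ∩ I)
    (hadm : AdmissibleIn (E ∪ B) (fun a b => (a, b) ∈ R) E)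
    (E' : Finset α) (hE'B' : E' ⊆ B')
    (hadm' : AdmissibleIn B' (fun a b => (a, b) ∈ R) E') :
    AdmissibleIn (E ∪ B) (fun a b => (a, b) ∈ R) (E ∪ E') :=
  stmt6_general A R E Eplus Eminus I hEp hEm hI B B' hB hB' hadm E' hadm'
end

section
/- Let G = (A, R) be a finite argument graph and let E ⊆ A be conflict-free. Let E⁺ = {β ∈ A | ∃α ∈ E, (α, β) ∈ R}, E⁻ = {β ∈ A | ∃α ∈ E, (β, α) ∈ R}, and I = A \ (E ∪ E⁺ ∪ E⁻). Let B ⊆ I ∪ E⁺ and B''₂ = B ∩ (E⁺ ∩ E⁻). Then E is the grounded extension of the induced subgraph G↾(E ∪ B) if and only if E is a complete extension of G↾(E ∪ B) and E is the grounded extension of the induced subgraph G↾(E ∪ B''₂). -/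
open scoped Classical

variable {α : Type*} [DecidableEq α]

/-!
Grounded extensions are least fixed points of Dung's characteristic function `S ↦ {a | S defends a}`.
Attackers of `E` inside `E ∪ B` all lie in `B''₂ ⊆ E⁺`, so as long as `S ⊆ E` the characteristic
functions of `G↾(E ∪ B)` and `G↾(E ∪ B''₂)` agree on `E`. When `E` is closed under both, their least
fixed points therefore both lie below `E` and coincide. Completeness of `E` in `G↾(E ∪ B)` gives
closure under the first; closure under the second is automatic, since `E` attacks every argument of
`B''₂` and is conflict-free.
-/

theorem OrderHom.lfp_le_lfp_of_map_inf_eq {L : Type*} [CompleteLattice L] {f g : L →o L} {e : L}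
    (hf : f e ≤ e) (hg : g e ≤ e) (hfg : ∀ x ≤ e, f x ⊓ e = g x ⊓ e) : g.lfp ≤ f.lfp := by
  have hle : f.lfp ≤ e := f.lfp_le hf
  refine g.lfp_le (le_of_eq ?_)
  calc g f.lfp = g f.lfp ⊓ e := (inf_eq_left.2 ((g.mono hle).trans hg)).symm
    _ = f f.lfp ⊓ e := (hfg _ hle).symm
    _ = f.lfp := by rw [f.map_lfp, inf_eq_left.2 hle]

theorem OrderHom.lfp_eq_lfp_of_map_inf_eq {L : Type*} [CompleteLattice L] {f g : L →o L} {e : L}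
    (hf : f e ≤ e) (hg : g e ≤ e) (hfg : ∀ x ≤ e, f x ⊓ e = g x ⊓ e) : f.lfp = g.lfp :=
  le_antisymm (lfp_le_lfp_of_map_inf_eq hg hf fun x hx => (hfg x hx).symm)
    (lfp_le_lfp_of_map_inf_eq hf hg hfg)

section Grounded

omit [DecidableEq α]

/-- Dung's characteristic function of the induced subgraph on `A'`. -/
def defended (A' : Finset α) (R : α → α → Prop) : Set α →o Set α where
  toFun S := {a | a ∈ A' ∧ ∀ b, Restrict A' R b a → ∃ c ∈ S, Restrict A' R c b}
  monotone' _ _ hST _ ha := ⟨ha.1, fun b hb => (ha.2 b hb).imp fun _ hc => ⟨hST hc.1, hc.2⟩⟩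

variable {A' : Finset α} {R : α → α → Prop}

theorem completeIn_iff {E : Finset α} :
    CompleteIn A' R E ↔ ConflictFree (Restrict A' R) E ∧ defended A' R E = E := by
  constructor
  · rintro ⟨⟨hEA, hcf, hacc⟩, hclosed⟩
    exact ⟨hcf, Set.Subset.antisymm (fun a ha => hclosed a ha.1 ha.2)
      fun a ha => ⟨hEA ha, hacc a ha⟩⟩
  · rintro ⟨hcf, hfix⟩
    have hsub : ∀ a ∈ E, a ∈ defended A' R E := fun a ha => hfix.ge ha
    exact ⟨⟨fun a ha => (hsub a ha).1, hcf, fun a ha => (hsub a ha).2⟩,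
      fun a haA hacc => hfix.le ⟨haA, hacc⟩⟩

theorem lfp_defended_subset : (defended A' R).lfp ⊆ A' :=
  (defended A' R).lfp_le fun _ ha => ha.1

/-- An argument of the least fixed point attacked from `S` would need a defender attacked from `S`;
so "`S` attacks nothing in the least fixed point" propagates through the iteration. -/
theorem conflictFree_lfp_defended {a b : α} (ha : a ∈ (defended A' R).lfp)
    (hb : b ∈ (defended A' R).lfp) : ¬ Restrict A' R a b := by
  suffices h : ∀ a ∈ (defended A' R).lfp, ∀ b ∈ (defended A' R).lfp, ¬ Restrict A' R a b from
    h a ha b hb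
  refine (defended A' R).lfp_induction (p := fun S : Set α => ∀ a ∈ S, ∀ b ∈ (defended A' R).lfp,
    ¬ Restrict A' R a b) ?_ fun s hs a ha => ?_
  · intro S hS _ a ha b hb hab
    obtain ⟨c, hcG, hca⟩ := ((defended A' R).map_lfp.ge hb).2 a hab
    obtain ⟨d, hdS, hdc⟩ := ha.2 c hca
    exact hS d hdS c hcG hdc
  · obtain ⟨S, hSs, haS⟩ := Set.mem_sUnion.1 ha
    exact hs S hSs a haS

theorem groundedIn_iff_coe_eq_lfp {E : Finset α} :
    GroundedIn A' R E ↔ (E : Set α) = (defended A' R).lfp := by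
  have hlfp_complete : ∀ G : Finset α, (G : Set α) = (defended A' R).lfp → CompleteIn A' R G :=
    fun G hG => completeIn_iff.2
      ⟨fun a ha b hb => conflictFree_lfp_defended (hG ▸ ha) (hG ▸ hb), by rw [hG, OrderHom.map_lfp]⟩
  constructor
  · rintro ⟨hE, hleast⟩
    obtain ⟨G, hG⟩ := ((A'.finite_toSet).subset lfp_defended_subset).exists_finset_coe
    exact le_antisymm (hG ▸ Finset.coe_subset.2 (hleast G (hlfp_complete G hG)))
      ((defended A' R).lfp_le_fixed (completeIn_iff.1 hE).2)
  · intro hE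
    exact ⟨hlfp_complete E hE, fun F hF =>
      Finset.coe_subset.1 (hE ▸ (defended A' R).lfp_le_fixed (completeIn_iff.1 hF).2)⟩

theorem StableIn.defended_subset {E : Finset α} (hE : StableIn A' R E) : defended A' R E ⊆ E := by
  intro a ⟨haA, hacc⟩
  by_contra haE
  obtain ⟨e, heE, hea⟩ := hE.2.2 a haA haE
  obtain ⟨c, hcE, hce⟩ := hacc e hea
  exact hE.2.1 c hcE e heE hce

theorem stableIn_union_of_forall_attacked [DecidableEq α] {E C : Finset α}
    (hcf : ConflictFree R E) (hC : ∀ b ∈ C, ∃ e ∈ E, R e b) : StableIn (E ∪ C) R E := by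
  refine ⟨Finset.subset_union_left, fun a ha b hb hab => hcf a ha b hb hab.2.2, fun b hb hbE => ?_⟩
  obtain ⟨e, heE, heb⟩ := hC b ((Finset.mem_union.1 hb).resolve_left hbE)
  exact ⟨e, heE, Finset.mem_union_left _ heE, hb, heb⟩

variable {A₀ E : Finset α}

theorem defended_inter_eq_of_attackers_subset (hA₀ : A₀ ⊆ A') (hE : E ⊆ A₀)
    (hatt : ∀ a ∈ E, ∀ b ∈ A', R b a → b ∈ A₀) {S : Set α} (hS : S ⊆ E) :
    defended A' R S ∩ E = defended A₀ R S ∩ E := by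
  ext a
  refine ⟨fun ⟨⟨_, hacc⟩, haE⟩ => ⟨⟨hE haE, fun b hb => ?_⟩, haE⟩,
    fun ⟨⟨_, hacc⟩, haE⟩ => ⟨⟨hA₀ (hE haE), fun b hb => ?_⟩, haE⟩⟩
  · obtain ⟨c, hcS, hc⟩ := hacc b ⟨hA₀ hb.1, hA₀ hb.2.1, hb.2.2⟩
    exact ⟨c, hcS, hE (hS hcS), hb.1, hc.2.2⟩
  · obtain ⟨c, hcS, hc⟩ := hacc b ⟨hatt a haE b hb.1 hb.2.2, hE haE, hb.2.2⟩
    exact ⟨c, hcS, hA₀ (hE (hS hcS)), hb.1, hc.2.2⟩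

theorem lfp_defended_eq_of_attackers_subset (hA₀ : A₀ ⊆ A') (hE : E ⊆ A₀)
    (hatt : ∀ a ∈ E, ∀ b ∈ A', R b a → b ∈ A₀)
    (hclosed : defended A' R E ⊆ E) (hclosed₀ : defended A₀ R E ⊆ E) :
    (defended A' R).lfp = (defended A₀ R).lfp :=
  OrderHom.lfp_eq_lfp_of_map_inf_eq hclosed hclosed₀ fun _ hS =>
    defended_inter_eq_of_attackers_subset hA₀ hE hatt hS

end Grounded

/-- An argument of `I` does not attack `E`, so attackers of `E` from `B ⊆ I ∪ E⁺` lie in `E⁺`. -/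
theorem mem_inter_of_attacks_of_mem_union {A E Eplus Eminus I B : Finset α} {R : Finset (α × α)}
    (hcf : ConflictFree (fun a b => (a, b) ∈ R) E)
    (hEp : Eplus = A.filter (fun b => ∃ a ∈ E, (a, b) ∈ R))
    (hEm : Eminus = A.filter (fun b => ∃ a ∈ E, (b, a) ∈ R))
    (hI : I = A \ (E ∪ Eplus ∪ Eminus)) (hB : B ⊆ I ∪ Eplus)
    {a b : α} (ha : a ∈ E) (hb : b ∈ E ∪ B) (hba : (b, a) ∈ R) : b ∈ B ∩ (Eplus ∩ Eminus) := by
  have hbB : b ∈ B := (Finset.mem_union.1 hb).resolve_left fun hbE => hcf b hbE a ha hba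
  have hbA : b ∈ A := by
    rcases Finset.mem_union.1 (hB hbB) with hbI | hbEp
    · rw [hI] at hbI
      exact (Finset.mem_sdiff.1 hbI).1
    · rw [hEp] at hbEp
      exact (Finset.mem_filter.1 hbEp).1
  have hbEm : b ∈ Eminus := by
    rw [hEm]
    exact Finset.mem_filter.2 ⟨hbA, a, ha, hba⟩
  have hbI : b ∉ I := by
    rw [hI]
    simp [hbEm]
  have hbEp : b ∈ Eplus := (Finset.mem_union.1 (hB hbB)).resolve_left hbI
  exact Finset.mem_inter.2 ⟨hbB, Finset.mem_inter.2 ⟨hbEp, hbEm⟩⟩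

theorem stmt7_general (A : Finset α) (R : Finset (α × α))
    (E : Finset α)
    (hcf : ConflictFree (fun a b => (a, b) ∈ R) E)
    (Eplus Eminus I : Finset α)
    (hEp : Eplus = A.filter (fun b => ∃ a ∈ E, (a, b) ∈ R))
    (hEm : Eminus = A.filter (fun b => ∃ a ∈ E, (b, a) ∈ R))
    (hI : I = A \ (E ∪ Eplus ∪ Eminus))
    (B B2 : Finset α) (hB : B ⊆ I ∪ Eplus) (hB2 : B2 = B ∩ (Eplus ∩ Eminus)) :
    GroundedIn (E ∪ B) (fun a b => (a, b) ∈ R) E ↔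
      (CompleteIn (E ∪ B) (fun a b => (a, b) ∈ R) E ∧
        GroundedIn (E ∪ B2) (fun a b => (a, b) ∈ R) E) := by
  have hB2B : B2 ⊆ B := hB2 ▸ Finset.inter_subset_left
  have hattackers : ∀ a ∈ E, ∀ b ∈ E ∪ B, (b, a) ∈ R → b ∈ E ∪ B2 := fun a ha b hb hba =>
    Finset.mem_union_right _ <| hB2 ▸ mem_inter_of_attacks_of_mem_union hcf hEp hEm hI hB ha hb hba
  have hstable : StableIn (E ∪ B2) (fun a b => (a, b) ∈ R) E := by
    refine stableIn_union_of_forall_attacked hcf fun b hb => ?_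
    rw [hB2, hEp] at hb
    exact (Finset.mem_filter.1 (Finset.mem_inter.1 (Finset.mem_inter.1 hb).2).1).2
  have hlfp (hc : CompleteIn (E ∪ B) (fun a b => (a, b) ∈ R) E) :
      (defended (E ∪ B) fun a b => (a, b) ∈ R).lfp = (defended (E ∪ B2) fun a b => (a, b) ∈ R).lfp :=
    lfp_defended_eq_of_attackers_subset (Finset.union_subset_union_right hB2B)
      Finset.subset_union_left hattackers (completeIn_iff.1 hc).2.le hstable.defended_subset
  rw [groundedIn_iff_coe_eq_lfp, groundedIn_iff_coe_eq_lfp]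
  constructor
  · intro hE
    have hc := (groundedIn_iff_coe_eq_lfp.2 hE).1
    exact ⟨hc, hE.trans (hlfp hc)⟩
  · rintro ⟨hc, hE⟩
    exact hE.trans (hlfp hc).symm

theorem stmt7 (A : Finset α) (R : Finset (α × α)) (hRA : R ⊆ A ×ˢ A)
    (E : Finset α) (hEA : E ⊆ A)
    (hcf : ConflictFree (fun a b => (a, b) ∈ R) E)
    (Eplus Eminus I : Finset α)
    (hEp : Eplus = A.filter (fun b => ∃ a ∈ E, (a, b) ∈ R))
    (hEm : Eminus = A.filter (fun b => ∃ a ∈ E, (b, a) ∈ R))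
    (hI : I = A \ (E ∪ Eplus ∪ Eminus))
    (B B2 : Finset α) (hB : B ⊆ I ∪ Eplus) (hB2 : B2 = B ∩ (Eplus ∩ Eminus)) :
    GroundedIn (E ∪ B) (fun a b => (a, b) ∈ R) E ↔
      (CompleteIn (E ∪ B) (fun a b => (a, b) ∈ R) E ∧
        GroundedIn (E ∪ B2) (fun a b => (a, b) ∈ R) E) :=
  stmt7_general A R E hcf Eplus Eminus I hEp hEm hI B B2 hB hB2
end

section
/- Let G^p = (A, R, p) be a finite probabilistic argument graph with p : A → [0,1], and let E ⊆ A be conflict-free. Let E⁺ = {β ∈ A | ∃α ∈ E, (α, β) ∈ R} and E⁻ = {β ∈ A | ∃α ∈ E, (β, α) ∈ R}. Then the probability that E is an admissible extension satisfies p(E^ad) = (Π_{α ∈ E} p(α)) · (Π_{β ∈ E⁻ \ E⁺} (1 − p(β))), where p(E^ad) = Σ_{A' ⊆ A, E is an admissible set of G↾A'} (Π_{α ∈ A'} p(α)) · (Π_{α ∈ A \ A'} (1 − p(α))). -/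
open scoped Classical

variable {α : Type*} [DecidableEq α]

/-!
For conflict-free `E`, the set `E` is admissible in `G↾A'` exactly when `E ⊆ A'` and `A'` avoids
every attacker of `E` that `E` does not counter-attack, i.e. `A'` avoids `E⁻ \ E⁺`. Under the
product distribution these constraints on `A'` concern disjoint sets of arguments, so the
probability of the event is `∏_{E} p · ∏_{E⁻ \ E⁺} (1 - p)`.
-/

omit [DecidableEq α] in
theorem admissibleIn_iff_of_conflictFree {R : α → α → Prop} {E A' : Finset α}
    (hcf : ConflictFree R E) :
    AdmissibleIn A' R E ↔ E ⊆ A' ∧ ∀ b ∈ A', (∃ a ∈ E, R b a) → ∃ c ∈ E, R c b := by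
  constructor
  · rintro ⟨hEA', -, hacc⟩
    refine ⟨hEA', fun b hb ⟨a, ha, hba⟩ => ?_⟩
    obtain ⟨c, hc, -, -, hcb⟩ := hacc a ha b ⟨hb, hEA' ha, hba⟩
    exact ⟨c, hc, hcb⟩
  · rintro ⟨hEA', hdef⟩
    refine ⟨hEA', fun a ha b hb hab => hcf a ha b hb hab.2.2, ?_⟩
    rintro a ha b ⟨hb, -, hba⟩
    obtain ⟨c, hc, hcb⟩ := hdef b hb ⟨a, ha, hba⟩
    exact ⟨c, hc, hEA' hc, hb, hcb⟩

/-- The probability that a random subset `A'` of `A`, containing each `a` independently with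
probability `p a`, contains `E` and avoids `D`. -/
theorem sum_powerset_filter_superset_disjoint {R : Type*} [CommRing R] (p : α → R)
    {A E D : Finset α} (hEA : E ⊆ A) (hDA : D ⊆ A) (hED : Disjoint E D) :
    ∑ A' ∈ A.powerset.filter (fun A' => E ⊆ A' ∧ Disjoint A' D),
        (∏ a ∈ A', p a) * ∏ a ∈ A \ A', (1 - p a)
      = (∏ a ∈ E, p a) * ∏ a ∈ D, (1 - p a) := by
  -- Expand `∏_{a ∈ A} (f a + g a)` where `f` kills `D` and `g` kills `E`.
  set f : α → R := fun a => if a ∉ D then p a else 0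
  set g : α → R := fun a => if a ∉ E then 1 - p a else 0
  have hfg : ∀ a, f a + g a =
      (if a ∈ E then p a else 1) * (if a ∈ D then 1 - p a else 1) := by
    intro a
    by_cases hE : a ∈ E
    · simp [f, g, hE, Finset.disjoint_left.mp hED hE]
    · by_cases hD : a ∈ D <;> simp [f, g, hE, hD]
  have hexpand := Finset.prod_add f g A
  rw [Finset.prod_congr rfl fun a _ => hfg a, Finset.prod_mul_distrib, Finset.prod_ite_mem,
    Finset.prod_ite_mem, Finset.inter_eq_right.mpr hEA, Finset.inter_eq_right.mpr hDA]
    at hexpand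
  rw [hexpand, Finset.sum_filter]
  refine Finset.sum_congr rfl fun A' hA' => ?_
  simp only [f, g, Finset.prod_ite_zero, ite_zero_mul_ite_zero, ← Finset.disjoint_right,
    disjoint_sdiff_iff_le hEA (Finset.mem_powerset.mp hA')]
  exact if_congr (by rw [disjoint_comm, and_comm]) rfl rfl

theorem stmt8_general (A : Finset α) (R : Finset (α × α))
    (p : α → ℝ)
    (E : Finset α) (hEA : E ⊆ A)
    (hcf : ConflictFree (fun a b => (a, b) ∈ R) E)
    (Eplus Eminus : Finset α)
    (hEp : Eplus = A.filter (fun b => ∃ a ∈ E, (a, b) ∈ R))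
    (hEm : Eminus = A.filter (fun b => ∃ a ∈ E, (b, a) ∈ R)) :
    ∑ A' ∈ A.powerset.filter
        (fun A' => AdmissibleIn A' (fun a b => (a, b) ∈ R) E),
        (∏ a ∈ A', p a) * ∏ a ∈ A \ A', (1 - p a)
      = (∏ a ∈ E, p a) * ∏ b ∈ Eminus \ Eplus, (1 - p b) := by
  have hDA : Eminus \ Eplus ⊆ A :=
    Finset.sdiff_subset.trans (hEm ▸ Finset.filter_subset _ _)
  have hED : Disjoint E (Eminus \ Eplus) := by
    refine Finset.disjoint_left.mpr fun b hb hbD => ?_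
    obtain ⟨-, a, ha, hba⟩ := Finset.mem_filter.mp (hEm ▸ (Finset.mem_sdiff.mp hbD).1)
    exact hcf b hb a ha hba
  rw [← sum_powerset_filter_superset_disjoint p hEA hDA hED]
  refine Finset.sum_congr (Finset.filter_congr fun A' hA' => ?_) fun _ _ => rfl
  rw [admissibleIn_iff_of_conflictFree hcf, Finset.disjoint_left]
  exact and_congr_right fun _ => forall₂_congr fun b hb => by
    simp [hEp, hEm, Finset.mem_powerset.mp hA' hb]

theorem stmt8 (A : Finset α) (R : Finset (α × α)) (hRA : R ⊆ A ×ˢ A)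
    (p : α → ℝ) (hp : ∀ a ∈ A, 0 ≤ p a ∧ p a ≤ 1)
    (E : Finset α) (hEA : E ⊆ A)
    (hcf : ConflictFree (fun a b => (a, b) ∈ R) E)
    (Eplus Eminus : Finset α)
    (hEp : Eplus = A.filter (fun b => ∃ a ∈ E, (a, b) ∈ R))
    (hEm : Eminus = A.filter (fun b => ∃ a ∈ E, (b, a) ∈ R)) :
    ∑ A' ∈ A.powerset.filter
        (fun A' => AdmissibleIn A' (fun a b => (a, b) ∈ R) E),
        (∏ a ∈ A', p a) * ∏ a ∈ A \ A', (1 - p a)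
      = (∏ a ∈ E, p a) * ∏ b ∈ Eminus \ Eplus, (1 - p b) :=
  stmt8_general A R p E hEA hcf Eplus Eminus hEp hEm
end

section
/- Let G^p = (A, R, p) be a finite probabilistic argument graph with p : A → [0,1], and let E ⊆ A be conflict-free. Let E⁺ = {β ∈ A | ∃α ∈ E, (α, β) ∈ R}, E⁻ = {β ∈ A | ∃α ∈ E, (β, α) ∈ R}, and I = A \ (E ∪ E⁺ ∪ E⁻). Then the probability that E is a stable extension satisfies p(E^st) = (Π_{α ∈ E} p(α)) · (Π_{β ∈ I ∪ (E⁻ \ E⁺)} (1 − p(β))), where p(E^st) = Σ_{A' ⊆ A, E is a stable extension of G↾A'} (Π_{α ∈ A'} p(α)) · (Π_{α ∈ A \ A'} (1 − p(α))). -/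
open scoped Classical

variable {α : Type*} [DecidableEq α]

/-!
Since `E` is conflict-free, `E` is stable in `G↾A'` exactly when `E ⊆ A' ⊆ E ∪ E⁺`. Summing the
weights of these `A'`, each argument of `E⁺` contributes a factor `p + (1 - p) = 1`, which leaves
`p` on `E` and `1 - p` on `A \ (E ∪ E⁺)`; as `E⁻` is disjoint from `E`, this set is `I ∪ (E⁻ \ E⁺)`.
-/

open Finset

theorem sdiff_union_eq_sdiff_union_union_sdiff {A E P M : Finset α} (hMA : M ⊆ A)
    (hME : Disjoint M E) : A \ (E ∪ P) = A \ (E ∪ P ∪ M) ∪ M \ P := by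
  ext a
  have hMA : a ∈ M → a ∈ A := @hMA a
  have hME : a ∈ M → a ∉ E := fun h => disjoint_left.1 hME h
  simp only [mem_sdiff, mem_union]
  tauto

theorem stableIn_iff_of_conflictFree {R : α → α → Prop} [DecidableRel R] {A A' E : Finset α}
    (hcf : ConflictFree R E) (hA' : A' ⊆ A) :
    StableIn A' R E ↔ E ⊆ A' ∧ A' ⊆ E ∪ A.filter (fun b => ∃ a ∈ E, R a b) := by
  refine ⟨fun ⟨hE, _, hatt⟩ => ⟨hE, fun b hb => ?_⟩, fun ⟨hE, hA'E⟩ => ⟨hE, ?_, ?_⟩⟩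
  · by_cases hbE : b ∈ E
    · exact mem_union_left _ hbE
    · obtain ⟨a, ha, -, -, hab⟩ := hatt b hb hbE
      exact mem_union_right _ (mem_filter.2 ⟨hA' hb, a, ha, hab⟩)
  · exact fun a ha b hb hab => hcf a ha b hb hab.2.2
  · intro b hb hbE
    obtain ⟨a, ha, hab⟩ := (mem_filter.1 ((mem_union.1 (hA'E hb)).resolve_left hbE)).2
    exact ⟨a, ha, hE ha, hb, hab⟩

theorem filter_powerset_between_eq_image_union {A E P : Finset α} (hA : E ∪ P ⊆ A) :
    A.powerset.filter (fun A' => E ⊆ A' ∧ A' ⊆ E ∪ P) = P.powerset.image (E ∪ ·) := by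
  ext A'
  simp only [mem_filter, mem_powerset, mem_image]
  constructor
  · rintro ⟨-, hE, hA'⟩
    exact ⟨A' \ E, sdiff_le_iff.2 hA', union_sdiff_of_subset hE⟩
  · rintro ⟨S, hS, rfl⟩
    have hES : E ∪ S ⊆ E ∪ P := union_subset_union_right hS
    exact ⟨hES.trans hA, subset_union_left, hES⟩

theorem sum_filter_between_prod_mul_prod_one_sub {M : Type*} [CommRing M] (p : α → M)
    {A E P : Finset α} (hEP : Disjoint E P) (hA : E ∪ P ⊆ A) :
    ∑ A' ∈ A.powerset.filter (fun A' => E ⊆ A' ∧ A' ⊆ E ∪ P),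
        (∏ a ∈ A', p a) * ∏ a ∈ A \ A', (1 - p a)
      = (∏ a ∈ E, p a) * ∏ a ∈ A \ (E ∪ P), (1 - p a) := by
  have hinj : Set.InjOn (E ∪ ·) P.powerset := fun S hS T hT hST => by
    have hES := hEP.mono_right (mem_powerset.1 hS)
    have hET := hEP.mono_right (mem_powerset.1 hT)
    simpa only [union_sdiff_cancel_left hES, union_sdiff_cancel_left hET] using
      congrArg (· \ E) hST
  have hterm : ∀ S ∈ P.powerset, (∏ a ∈ E ∪ S, p a) * ∏ a ∈ A \ (E ∪ S), (1 - p a)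
      = (∏ a ∈ E, p a) * (∏ a ∈ A \ (E ∪ P), (1 - p a)) *
        ((∏ a ∈ S, p a) * ∏ a ∈ P \ S, (1 - p a)) := by
    intro S hS
    have hSP := mem_powerset.1 hS
    have hsplit : A \ (E ∪ S) = A \ (E ∪ P) ∪ P \ S := by
      rw [sdiff_union_eq_sdiff_union_union_sdiff (subset_union_right.trans hA) hEP.symm,
        union_assoc, union_eq_right.2 hSP]
    have hdisj : Disjoint (A \ (E ∪ P)) (P \ S) :=
      (disjoint_sdiff_self_left.mono_right subset_union_right).mono_right sdiff_subset
    rw [prod_union (hEP.mono_right hSP), hsplit, prod_union hdisj]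
    ring
  rw [filter_powerset_between_eq_image_union hA, sum_image hinj, sum_congr rfl hterm,
    ← mul_sum, ← prod_add]
  simp

theorem stmt9_general (A : Finset α) (R : Finset (α × α))
    (p : α → ℝ)
    (E : Finset α) (hEA : E ⊆ A)
    (hcf : ConflictFree (fun a b => (a, b) ∈ R) E)
    (Eplus Eminus I : Finset α)
    (hEp : Eplus = A.filter (fun b => ∃ a ∈ E, (a, b) ∈ R))
    (hEm : Eminus = A.filter (fun b => ∃ a ∈ E, (b, a) ∈ R))
    (hI : I = A \ (E ∪ Eplus ∪ Eminus)) :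
    ∑ A' ∈ A.powerset.filter
        (fun A' => StableIn A' (fun a b => (a, b) ∈ R) E),
        (∏ a ∈ A', p a) * ∏ a ∈ A \ A', (1 - p a)
      = (∏ a ∈ E, p a) * ∏ b ∈ I ∪ (Eminus \ Eplus), (1 - p b) := by
  have hEEp : Disjoint E Eplus := hEp ▸ disjoint_right.2 fun b hb hbE => by
    obtain ⟨a, ha, hab⟩ := (mem_filter.1 hb).2
    exact hcf a ha b hbE hab
  have hEmE : Disjoint Eminus E := hEm ▸ disjoint_left.2 fun b hb hbE => by
    obtain ⟨a, ha, hba⟩ := (mem_filter.1 hb).2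
    exact hcf b hbE a ha hba
  have hstable : A.powerset.filter (fun A' => StableIn A' (fun a b => (a, b) ∈ R) E)
      = A.powerset.filter (fun A' => E ⊆ A' ∧ A' ⊆ E ∪ Eplus) :=
    hEp ▸ filter_congr fun A' hA' => stableIn_iff_of_conflictFree hcf (mem_powerset.1 hA')
  rw [hstable, sum_filter_between_prod_mul_prod_one_sub p hEEp
      (union_subset hEA (hEp ▸ filter_subset _ A)),
    sdiff_union_eq_sdiff_union_union_sdiff (hEm ▸ filter_subset _ A) hEmE, hI]

theorem stmt9 (A : Finset α) (R : Finset (α × α)) (hRA : R ⊆ A ×ˢ A)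
    (p : α → ℝ) (hp : ∀ a ∈ A, 0 ≤ p a ∧ p a ≤ 1)
    (E : Finset α) (hEA : E ⊆ A)
    (hcf : ConflictFree (fun a b => (a, b) ∈ R) E)
    (Eplus Eminus I : Finset α)
    (hEp : Eplus = A.filter (fun b => ∃ a ∈ E, (a, b) ∈ R))
    (hEm : Eminus = A.filter (fun b => ∃ a ∈ E, (b, a) ∈ R))
    (hI : I = A \ (E ∪ Eplus ∪ Eminus)) :
    ∑ A' ∈ A.powerset.filter
        (fun A' => StableIn A' (fun a b => (a, b) ∈ R) E),
        (∏ a ∈ A', p a) * ∏ a ∈ A \ A', (1 - p a)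
      = (∏ a ∈ E, p a) * ∏ b ∈ I ∪ (Eminus \ Eplus), (1 - p b) :=
  stmt9_general A R p E hEA hcf Eplus Eminus I hEp hEm hI
end

section
/- Let G^p = (A, R, p) be a finite probabilistic argument graph with p : A → [0,1], and let E ⊆ A be conflict-free. Let E⁺ = {β ∈ A | ∃α ∈ E, (α, β) ∈ R}, E⁻ = {β ∈ A | ∃α ∈ E, (β, α) ∈ R}, and I = A \ (E ∪ E⁺ ∪ E⁻). Then the probability that E is a complete extension satisfies p(E^co) = P_E · P_{I_CO}, where P_E = (Π_{α ∈ E} p(α)) · (Π_{β ∈ E⁻ \ E⁺} (1 − p(β))) and P_{I_CO} = Σ over all B' ⊆ I such that for every α ∈ B' the set {β ∈ A | (β, α) ∈ R} ∩ B' is nonempty, of (Π_{γ ∈ B'} p(γ)) · (Π_{ξ ∈ I \ B'} (1 − p(ξ))); here p(E^co) = Σ_{A' ⊆ A, E is a complete extension of G↾A'} (Π_{α ∈ A'} p(α)) · (Π_{α ∈ A \ A'} (1 − p(α))). -/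
open scoped Classical

variable {α : Type*} [DecidableEq α]

/-!
For `A' ⊆ A`, the set `E` is a complete extension of `G↾A'` exactly when `A'` contains `E`,
avoids the attackers of `E` that `E` does not attack back, and every argument of `A' ∩ I` is
attacked from within `A' ∩ I` (an unattacked one would be defended by `E` without belonging to
it); the arguments of `E⁺` are unconstrained, being defeated by `E` anyway. These conditions
concern the disjoint blocks `E ∪ (E⁻ \ E⁺)`, `E⁺` and `I` of `A` separately, and arguments are
independent, so `p(E^co)` factors into the probability of each condition; the one on `E⁺` is
vacuous and contributes `1`.
-/

namespace Finset

theorem union_inter_eq_left_of_disjoint {S T X Y : Finset α} (hST : Disjoint S T)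
    (hX : X ⊆ S) (hY : Y ⊆ T) : (X ∪ Y) ∩ S = X := by
  rw [union_inter_distrib_right, inter_eq_left.2 hX,
    disjoint_iff_inter_eq_empty.1 (disjoint_of_subset_left hY hST.symm), union_empty]

theorem inter_union_eq_left_iff {X E M : Finset α} (hEM : Disjoint E M) :
    X ∩ (E ∪ M) = E ↔ E ⊆ X ∧ Disjoint X M := by
  constructor
  · intro h
    refine ⟨h ▸ inter_subset_left, disjoint_left.2 fun a haX haM => ?_⟩
    have haE : a ∈ E := h ▸ mem_inter.2 ⟨haX, mem_union_right E haM⟩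
    exact disjoint_left.1 hEM haE haM
  · rintro ⟨hEX, hXM⟩
    rw [inter_union_distrib_left, inter_eq_right.2 hEX, disjoint_iff_inter_eq_empty.1 hXM,
      union_empty]

end Finset

open Finset

/-- `p(G↾A')`, for `A' ⊆ A`. -/
def subgraphProb (p : α → ℝ) (A A' : Finset α) : ℝ :=
  (∏ a ∈ A', p a) * ∏ a ∈ A \ A', (1 - p a)

theorem sum_subgraphProb_powerset (p : α → ℝ) (S : Finset α) :
    ∑ X ∈ S.powerset, subgraphProb p S X = 1 := by
  simp only [subgraphProb, ← prod_add, add_sub_cancel, prod_const_one]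

theorem subgraphProb_union (p : α → ℝ) {S T X Y : Finset α} (hST : Disjoint S T)
    (hX : X ⊆ S) (hY : Y ⊆ T) :
    subgraphProb p (S ∪ T) (X ∪ Y) = subgraphProb p S X * subgraphProb p T Y := by
  have hXY : Disjoint X Y := disjoint_of_subset_left hX (disjoint_of_subset_right hY hST)
  have hdiff : (S ∪ T) \ (X ∪ Y) = S \ X ∪ T \ Y := by
    ext a
    have := @hX a
    have := @hY a
    have := @disjoint_left.1 hST a
    simp only [mem_sdiff, mem_union]
    tauto
  have hdiff_disj : Disjoint (S \ X) (T \ Y) :=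
    disjoint_of_subset_left sdiff_subset (disjoint_of_subset_right sdiff_subset hST)
  rw [subgraphProb, subgraphProb, subgraphProb, hdiff, prod_union hXY, prod_union hdiff_disj]
  ring

/-- Events depending on disjoint parts of the graph are independent. -/
theorem sum_filter_subgraphProb_union (p : α → ℝ) {U S T : Finset α} (hU : S ∪ T = U)
    (hST : Disjoint S T) {P P₁ P₂ : Finset α → Prop} [DecidablePred P] [DecidablePred P₁]
    [DecidablePred P₂]
    (hP : ∀ X ⊆ U, P X ↔ P₁ (X ∩ S) ∧ P₂ (X ∩ T)) :
    ∑ X ∈ U.powerset.filter P, subgraphProb p U X =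
      (∑ X ∈ S.powerset.filter P₁, subgraphProb p S X) *
        ∑ Y ∈ T.powerset.filter P₂, subgraphProb p T Y := by
  subst hU
  have split : ∀ X ⊆ S ∪ T, X ∩ S ∪ X ∩ T = X := fun X hX => by
    rw [← inter_union_distrib_left, inter_eq_left.2 hX]
  rw [sum_mul_sum, ← sum_product']
  refine sum_nbij' (fun X => (X ∩ S, X ∩ T)) (fun q => q.1 ∪ q.2) ?_ ?_ ?_ ?_ ?_
  · intro X hX
    simp only [mem_filter, mem_powerset] at hX
    simp only [mem_product, mem_filter, mem_powerset]
    exact ⟨⟨inter_subset_right, ((hP X hX.1).1 hX.2).1⟩,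
      ⟨inter_subset_right, ((hP X hX.1).1 hX.2).2⟩⟩
  · rintro ⟨X, Y⟩ hXY
    obtain ⟨⟨hX, hX₁⟩, ⟨hY, hY₁⟩⟩ := by
      simpa only [mem_product, mem_filter, mem_powerset] using hXY
    simp only [mem_filter, mem_powerset]
    refine ⟨union_subset_union hX hY, (hP _ (union_subset_union hX hY)).2 ?_⟩
    rw [union_inter_eq_left_of_disjoint hST hX hY, union_comm,
      union_inter_eq_left_of_disjoint hST.symm hY hX]
    exact ⟨hX₁, hY₁⟩
  · intro X hX
    exact split X (mem_powerset.1 (mem_filter.1 hX).1)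
  · rintro ⟨X, Y⟩ hXY
    obtain ⟨⟨hX, -⟩, ⟨hY, -⟩⟩ := by
      simpa only [mem_product, mem_filter, mem_powerset] using hXY
    rw [union_inter_eq_left_of_disjoint hST hX hY, union_comm X Y,
      union_inter_eq_left_of_disjoint hST.symm hY hX]
  · intro X hX
    conv_lhs => rw [← split X (mem_powerset.1 (mem_filter.1 hX).1)]
    exact subgraphProb_union p hST inter_subset_right inter_subset_right

section Extension

variable (A : Finset α) (R : Finset (α × α)) (E : Finset α)

-- The sets `E⁺`, `E⁻` and `I` of the paper.
def attackees : Finset α := A.filter fun b => ∃ a ∈ E, (a, b) ∈ R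

def attackers : Finset α := A.filter fun b => ∃ a ∈ E, (b, a) ∈ R

def unrelated : Finset α := A \ (E ∪ attackees A R E ∪ attackers A R E)

variable {A R E}

theorem mem_attackees {b : α} : b ∈ attackees A R E ↔ b ∈ A ∧ ∃ a ∈ E, (a, b) ∈ R :=
  mem_filter

theorem mem_attackers {b : α} : b ∈ attackers A R E ↔ b ∈ A ∧ ∃ a ∈ E, (b, a) ∈ R :=
  mem_filter

theorem mem_unrelated {b : α} :
    b ∈ unrelated A R E ↔ b ∈ A ∧ b ∉ E ∧ b ∉ attackees A R E ∧ b ∉ attackers A R E := by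
  simp only [unrelated, mem_sdiff, mem_union, not_or, and_assoc]

theorem unrelated_subset : unrelated A R E ⊆ A := sdiff_subset

theorem disjoint_attackees (hcf : ConflictFree (fun a b => (a, b) ∈ R) E) :
    Disjoint E (attackees A R E) :=
  disjoint_left.2 fun b hb hb' => by
    obtain ⟨-, a, ha, hab⟩ := mem_attackees.1 hb'
    exact hcf a ha b hb hab

theorem disjoint_attackers (hcf : ConflictFree (fun a b => (a, b) ∈ R) E) :
    Disjoint E (attackers A R E) :=
  disjoint_left.2 fun b hb hb' => by
    obtain ⟨-, a, ha, hba⟩ := mem_attackers.1 hb'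
    exact hcf b hb a ha hba

variable {A' : Finset α}

theorem admissibleIn_of_disjoint (hcf : ConflictFree (fun a b => (a, b) ∈ R) E)
    (hA' : A' ⊆ A) (hEA' : E ⊆ A')
    (hM : Disjoint A' (attackers A R E \ attackees A R E)) :
    AdmissibleIn A' (fun a b => (a, b) ∈ R) E := by
  refine ⟨hEA', fun a ha b hb hab => hcf a ha b hb hab.2.2, ?_⟩
  rintro a ha b ⟨hbA', -, hba⟩
  have hb : b ∈ attackees A R E := by
    by_contra hb
    exact disjoint_left.1 hM hbA' (mem_sdiff.2 ⟨mem_attackers.2 ⟨hA' hbA', a, ha, hba⟩, hb⟩)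
  obtain ⟨-, c, hc, hcb⟩ := mem_attackees.1 hb
  exact ⟨c, hc, hEA' hc, hbA', hcb⟩

theorem AdmissibleIn.disjoint_attackers_sdiff_attackees
    (h : AdmissibleIn A' (fun a b => (a, b) ∈ R) E) (hA' : A' ⊆ A) :
    Disjoint A' (attackers A R E \ attackees A R E) := by
  refine disjoint_left.2 fun b hbA' hb => ?_
  obtain ⟨hbM, hbK⟩ := mem_sdiff.1 hb
  obtain ⟨-, a, ha, hba⟩ := mem_attackers.1 hbM
  obtain ⟨c, hc, -, -, hcb⟩ := h.2.2 a ha b ⟨hbA', h.1 ha, hba⟩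
  exact hbK (mem_attackees.2 ⟨hA' hbA', c, hc, hcb⟩)

theorem not_acceptable_of_mem_attackees (hcf : ConflictFree (fun a b => (a, b) ∈ R) E)
    (hEA' : E ⊆ A') {a : α} (ha : a ∈ attackees A R E)
    (haA' : a ∈ A') : ¬ Acceptable (Restrict A' fun a b => (a, b) ∈ R) E a := by
  intro hacc
  obtain ⟨-, c, hc, hca⟩ := mem_attackees.1 ha
  obtain ⟨d, hd, -, -, hdc⟩ := hacc c ⟨hEA' hc, haA', hca⟩
  exact hcf d hd c hc hdc

/-- Attackers of an unrelated argument coming from `E⁺` are defended by `E` and those from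
`E⁻ \ E⁺` are absent, so only attackers in `I` matter, and `E` never attacks these. -/
theorem acceptable_iff_of_mem_unrelated (hA' : A' ⊆ A) (hEA' : E ⊆ A')
    (hM : Disjoint A' (attackers A R E \ attackees A R E)) {a : α}
    (ha : a ∈ unrelated A R E) (haA' : a ∈ A') :
    Acceptable (Restrict A' fun a b => (a, b) ∈ R) E a ↔
      ∀ b ∈ A' ∩ unrelated A R E, (b, a) ∉ R := by
  obtain ⟨-, haE, haK, -⟩ := mem_unrelated.1 ha
  constructor
  · intro hacc b hb hba
    obtain ⟨hbA', hbI⟩ := mem_inter.1 hb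
    obtain ⟨c, hc, -, -, hcb⟩ := hacc b ⟨hbA', haA', hba⟩
    exact (mem_unrelated.1 hbI).2.2.1 (mem_attackees.2 ⟨hA' hbA', c, hc, hcb⟩)
  · rintro hno b ⟨hbA', -, hba⟩
    by_cases hbK : b ∈ attackees A R E
    · obtain ⟨-, c, hc, hcb⟩ := mem_attackees.1 hbK
      exact ⟨c, hc, hEA' hc, hbA', hcb⟩
    by_cases hbE : b ∈ E
    · exact absurd (mem_attackees.2 ⟨hA' haA', b, hbE, hba⟩) haK
    by_cases hbM : b ∈ attackers A R E
    · exact absurd (mem_sdiff.2 ⟨hbM, hbK⟩) (disjoint_left.1 hM hbA')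
    · have hbI : b ∈ unrelated A R E := mem_unrelated.2 ⟨hA' hbA', hbE, hbK, hbM⟩
      exact absurd hba (hno b (mem_inter.2 ⟨hbA', hbI⟩))

theorem completeIn_iff_s10 (hcf : ConflictFree (fun a b => (a, b) ∈ R) E)
    (hA' : A' ⊆ A) :
    CompleteIn A' (fun a b => (a, b) ∈ R) E ↔
      E ⊆ A' ∧ Disjoint A' (attackers A R E \ attackees A R E) ∧
        ∀ a ∈ A' ∩ unrelated A R E, ∃ b ∈ A' ∩ unrelated A R E, (b, a) ∈ R := by
  constructor
  · rintro ⟨hadm, hcomp⟩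
    have hM := hadm.disjoint_attackers_sdiff_attackees hA'
    refine ⟨hadm.1, hM, fun a ha => ?_⟩
    obtain ⟨haA', haI⟩ := mem_inter.1 ha
    by_contra! hno
    exact (mem_unrelated.1 haI).2.1 <| hcomp a haA' <|
      (acceptable_iff_of_mem_unrelated hA' hadm.1 hM haI haA').2 hno
  · rintro ⟨hEA', hM, hI⟩
    refine ⟨admissibleIn_of_disjoint hcf hA' hEA' hM, fun a haA' hacc => ?_⟩
    by_contra haE
    by_cases haK : a ∈ attackees A R E
    · exact not_acceptable_of_mem_attackees hcf hEA' haK haA' hacc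
    by_cases haM : a ∈ attackers A R E
    · exact disjoint_left.1 hM haA' (mem_sdiff.2 ⟨haM, haK⟩)
    have haI : a ∈ unrelated A R E := mem_unrelated.2 ⟨hA' haA', haE, haK, haM⟩
    obtain ⟨b, hb, hba⟩ := hI a (mem_inter.2 ⟨haA', haI⟩)
    exact (acceptable_iff_of_mem_unrelated hA' hEA' hM haI haA').1 hacc b hb hba

theorem union_attackees_union_unrelated (hEA : E ⊆ A) :
    E ∪ (attackers A R E \ attackees A R E) ∪ attackees A R E ∪ unrelated A R E = A := by
  ext b
  have := @hEA b
  simp only [mem_union, mem_sdiff, mem_unrelated]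
  have := @mem_attackees _ _ A R E b
  have := @mem_attackers _ _ A R E b
  tauto

theorem disjoint_unrelated :
    Disjoint (E ∪ (attackers A R E \ attackees A R E) ∪ attackees A R E) (unrelated A R E) :=
  disjoint_right.2 fun b hb => by
    obtain ⟨-, hbE, hbK, hbM⟩ := mem_unrelated.1 hb
    simp only [mem_union, mem_sdiff]
    tauto

end Extension

theorem stmt10_general (A : Finset α) (R : Finset (α × α))
    (p : α → ℝ)
    (E : Finset α) (hEA : E ⊆ A)
    (hcf : ConflictFree (fun a b => (a, b) ∈ R) E)
    (Eplus Eminus I : Finset α)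
    (hEp : Eplus = A.filter (fun b => ∃ a ∈ E, (a, b) ∈ R))
    (hEm : Eminus = A.filter (fun b => ∃ a ∈ E, (b, a) ∈ R))
    (hI : I = A \ (E ∪ Eplus ∪ Eminus)) :
    ∑ A' ∈ A.powerset.filter
        (fun A' => CompleteIn A' (fun a b => (a, b) ∈ R) E),
        (∏ a ∈ A', p a) * ∏ a ∈ A \ A', (1 - p a)
      = ((∏ a ∈ E, p a) * ∏ b ∈ Eminus \ Eplus, (1 - p b)) *
        ∑ B' ∈ I.powerset.filter
            (fun B' => ∀ a ∈ B', ((A.filter (fun b => (b, a) ∈ R)) ∩ B').Nonempty),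
            (∏ c ∈ B', p c) * ∏ x ∈ I \ B', (1 - p x) := by
  obtain rfl : Eplus = attackees A R E := hEp
  obtain rfl : Eminus = attackers A R E := hEm
  obtain rfl : I = unrelated A R E := hI
  set K := E ∪ (attackers A R E \ attackees A R E)
  have hEM : Disjoint E (attackers A R E \ attackees A R E) :=
    disjoint_of_subset_right sdiff_subset (disjoint_attackers hcf)
  have hK : Disjoint K (attackees A R E) :=
    disjoint_union_left.2 ⟨disjoint_attackees hcf, sdiff_disjoint⟩
  have hE : ∑ X ∈ (K ∪ attackees A R E).powerset.filter (· ∩ K = E),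
        subgraphProb p (K ∪ attackees A R E) X =
      (∏ a ∈ E, p a) * ∏ b ∈ attackers A R E \ attackees A R E, (1 - p b) := by
    rw [sum_filter_subgraphProb_union p rfl hK (P := (· ∩ K = E)) (P₁ := (· = E))
        (P₂ := fun _ => True) fun _ _ => (and_iff_left trivial).symm, filter_true,
      sum_subgraphProb_powerset, mul_one, filter_eq', if_pos (mem_powerset.2 subset_union_left),
      sum_singleton, subgraphProb, union_sdiff_left, hEM.symm.sdiff_eq_left]
  have hsplit : ∀ X ⊆ A, CompleteIn X (fun a b => (a, b) ∈ R) E ↔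
      X ∩ (K ∪ attackees A R E) ∩ K = E ∧ ∀ a ∈ X ∩ unrelated A R E,
        ({b ∈ A | (b, a) ∈ R} ∩ (X ∩ unrelated A R E)).Nonempty := by
    intro X hX
    rw [completeIn_iff_s10 hcf hX, ← and_assoc, ← inter_union_eq_left_iff hEM, inter_assoc,
      union_inter_cancel_left]
    refine and_congr_right' (forall₂_congr fun a _ => exists_congr fun b => ?_)
    simp only [mem_inter, mem_filter]
    have := @unrelated_subset _ _ A R E b
    tauto
  rw [← hE]
  exact sum_filter_subgraphProb_union p (union_attackees_union_unrelated hEA) disjoint_unrelated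
    hsplit

theorem stmt10 (A : Finset α) (R : Finset (α × α)) (hRA : R ⊆ A ×ˢ A)
    (p : α → ℝ) (hp : ∀ a ∈ A, 0 ≤ p a ∧ p a ≤ 1)
    (E : Finset α) (hEA : E ⊆ A)
    (hcf : ConflictFree (fun a b => (a, b) ∈ R) E)
    (Eplus Eminus I : Finset α)
    (hEp : Eplus = A.filter (fun b => ∃ a ∈ E, (a, b) ∈ R))
    (hEm : Eminus = A.filter (fun b => ∃ a ∈ E, (b, a) ∈ R))
    (hI : I = A \ (E ∪ Eplus ∪ Eminus)) :
    ∑ A' ∈ A.powerset.filter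
        (fun A' => CompleteIn A' (fun a b => (a, b) ∈ R) E),
        (∏ a ∈ A', p a) * ∏ a ∈ A \ A', (1 - p a)
      = ((∏ a ∈ E, p a) * ∏ b ∈ Eminus \ Eplus, (1 - p b)) *
        ∑ B' ∈ I.powerset.filter
            (fun B' => ∀ a ∈ B', ((A.filter (fun b => (b, a) ∈ R)) ∩ B').Nonempty),
            (∏ c ∈ B', p c) * ∏ x ∈ I \ B', (1 - p x) :=
  stmt10_general A R p E hEA hcf Eplus Eminus I hEp hEm hI
end
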